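/- Let X = X_1 + ... + X_K where the X_k are independent exponential random variables with rates a_k > 0, and let a_* = min_k a_k. Then for every 0 < δ < 1, P(X ≤ (1−δ)·E[X]) ≤ exp(−a_*·E[X]·(−δ − log(1−δ))). -/

import Mathlib

open ProbabilityTheory MeasureTheory Finset

/-!
Chernoff's bound with the parameter `-s`, `s = a_* δ / (1 - δ)`: by independence the moment
generating function of `X` at `-s` is `∏ a_k / (a_k + s)`, and Bernoulli's inequality
`(1 + v) ^ p ≤ 1 + p v` for `p = a_* / a_k ≤ 1`, `v = δ / (1 - δ)` bounds each factor by
`(1 - δ) ^ (a_* / a_k)`. Multiplying out gives `exp (a_* δ E[X]) (1 - δ) ^ (a_* E[X])`.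
-/

namespace ProbabilityTheory

lemma exponentialPDF_mul_exp_mul {r t : ℝ} (hr : 0 < r) (ht : t < r) (x : ℝ) :
    exponentialPDF r x * ENNReal.ofReal (Real.exp (t * x))
      = ENNReal.ofReal (r / (r - t)) * exponentialPDF (r - t) x := by
  have hrt : 0 < r - t := sub_pos.2 ht
  rcases lt_or_ge x 0 with hx | hx
  · simp [exponentialPDF_of_neg hx]
  · rw [exponentialPDF_of_nonneg hx, exponentialPDF_of_nonneg hx,
      ← ENNReal.ofReal_mul (by positivity), ← ENNReal.ofReal_mul (by positivity)]
    congr 1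
    rw [mul_assoc, ← Real.exp_add, show -(r * x) + t * x = -((r - t) * x) by ring]
    field_simp

lemma mgf_id_expMeasure {r t : ℝ} (hr : 0 < r) (ht : t < r) :
    mgf id (expMeasure r) t = r / (r - t) := by
  have hrt : 0 < r - t := sub_pos.2 ht
  rw [mgf, integral_eq_lintegral_of_nonneg_ae (ae_of_all _ fun x => (Real.exp_pos _).le)
      (by fun_prop)]
  change (∫⁻ x, ENNReal.ofReal (Real.exp (t * x)) ∂volume.withDensity (exponentialPDF r)).toReal
    = _
  rw [lintegral_withDensity_eq_lintegral_mul _ (f := exponentialPDF r)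
      (measurable_exponentialPDFReal r).ennreal_ofReal (by fun_prop)]
  simp_rw [Pi.mul_apply, exponentialPDF_mul_exp_mul hr ht]
  rw [lintegral_const_mul (f := exponentialPDF (r - t)) _
      (measurable_exponentialPDFReal (r - t)).ennreal_ofReal,
    lintegral_exponentialPDF_eq_one hrt, mul_one, ENNReal.toReal_ofReal (by positivity)]

variable {Ω : Type*} [MeasurableSpace Ω] {μ : Measure Ω}

lemma map_eq_expMeasure_of_cdf [IsFiniteMeasure μ] {Y : Ω → ℝ} (hY : AEMeasurable Y μ)
    {r : ℝ} (hr : 0 < r)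
    (hcdf : ∀ t : ℝ, 0 ≤ t → μ {ω | Y ω ≤ t} = ENNReal.ofReal (1 - Real.exp (-r * t))) :
    μ.map Y = expMeasure r := by
  have := isProbabilityMeasure_expMeasure hr
  refine Measure.ext_of_Iic _ _ fun t => ?_
  rw [Measure.map_apply_of_aemeasurable hY measurableSet_Iic, ← ofReal_cdf,
    cdf_expMeasure_eq hr]
  split_ifs with ht
  · rw [← neg_mul]
    exact hcdf t ht
  · rw [ENNReal.ofReal_zero]
    have hzero : μ {ω | Y ω ≤ 0} = 0 := by simp [hcdf 0 le_rfl]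
    exact measure_mono_null (fun ω (hω : Y ω ≤ t) => hω.trans (not_le.1 ht).le) hzero

lemma ae_pos_of_map_eq_expMeasure {Y : Ω → ℝ} (hY : AEMeasurable Y μ) {r : ℝ} (hr : 0 < r)
    (hY_law : μ.map Y = expMeasure r) : ∀ᵐ ω ∂μ, 0 < Y ω := by
  have := isProbabilityMeasure_expMeasure hr
  refine ae_of_ae_map hY (hY_law ▸ ?_)
  refine measure_mono_null (t := Set.Iic 0) (fun x (hx : ¬ 0 < x) => not_lt.1 hx) ?_
  rw [← ofReal_cdf, cdf_expMeasure_eq hr]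
  simp

lemma mgf_sum_of_map_eq_expMeasure {ι : Type*} {X : ι → Ω → ℝ} (hindep : iIndepFun X μ)
    (hmeas : ∀ i, Measurable (X i)) {s : Finset ι} {r : ι → ℝ} (hr : ∀ i ∈ s, 0 < r i)
    (hX_law : ∀ i ∈ s, μ.map (X i) = expMeasure (r i)) {t : ℝ} (ht : ∀ i ∈ s, t < r i) :
    mgf (∑ i ∈ s, X i) μ t = ∏ i ∈ s, r i / (r i - t) := by
  rw [hindep.mgf_sum hmeas]
  refine prod_congr rfl fun i hi => ?_
  rw [← mgf_id_map (hmeas i).aemeasurable, hX_law i hi, mgf_id_expMeasure (hr i hi) (ht i hi)]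

lemma measureReal_le_le_exp_mul_mgf_neg [IsFiniteMeasure μ] {Y : Ω → ℝ}
    (hY : AEMeasurable Y μ) (hnn : 0 ≤ᵐ[μ] Y) {s : ℝ} (hs : 0 ≤ s) (ε : ℝ) :
    μ.real {ω | Y ω ≤ ε} ≤ Real.exp (s * ε) * mgf Y μ (-s) := by
  have hint : Integrable (fun ω => Real.exp (-s * Y ω)) μ := by
    refine (integrable_const (1 : ℝ)).mono' (by fun_prop) ?_
    filter_upwards [hnn] with ω hω
    rw [Real.norm_of_nonneg (Real.exp_pos _).le, Real.exp_le_one_iff]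
    nlinarith [show 0 ≤ Y ω from hω]
  simpa using measure_le_le_exp_mul_mgf ε (neg_nonpos.2 hs) hint

end ProbabilityTheory

lemma div_add_mul_div_one_sub_le_rpow {a b δ : ℝ} (hb : 0 < b) (hba : b ≤ a) (hδ1 : δ < 1) :
    a / (a + b * δ / (1 - δ)) ≤ (1 - δ) ^ (b / a) := by
  have ha : 0 < a := hb.trans_le hba
  have h1δ : 0 < 1 - δ := by linarith
  have hv : -1 ≤ δ / (1 - δ) := by rw [le_div_iff₀ h1δ]; linarith
  have hbernoulli := rpow_one_add_le_one_add_mul_self hv (div_pos hb ha).le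
    ((div_le_one ha).2 hba)
  have hone_add : 1 + δ / (1 - δ) = (1 - δ)⁻¹ := by field_simp; ring
  rw [hone_add, Real.inv_rpow h1δ.le] at hbernoulli
  calc a / (a + b * δ / (1 - δ)) = (1 + b / a * (δ / (1 - δ)))⁻¹ := by field_simp
    _ ≤ ((1 - δ) ^ (b / a))⁻¹⁻¹ := inv_anti₀ (by positivity) hbernoulli
    _ = (1 - δ) ^ (b / a) := inv_inv _

/-- **Lower tail bound for sums of independent exponentials** (Janson, Thm 5.1(iii)).
`X = X_0 + ⋯ + X_{K-1}` with independent `X k ~ Exp(a k)`, `a_* = min_k a k`,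
`E[X] = ∑ 1/(a k)`.  For every `0 < δ < 1`,
`P(X ≤ (1−δ)E[X]) ≤ exp(−a_* E[X] (−δ − log(1−δ)))`. -/
theorem sum_exponential_lower_tail
    {Ω : Type*} [MeasurableSpace Ω] (P : Measure Ω) [IsProbabilityMeasure P]
    (K : ℕ) (hK : 0 < K) (a : ℕ → ℝ) (ha : ∀ k < K, 0 < a k)
    (X : ℕ → Ω → ℝ) (hmeas : ∀ k, Measurable (X k))
    (hindep : iIndepFun X P)
    (hexp : ∀ k < K, ∀ t : ℝ, 0 ≤ t →
      P {ω | X k ω ≤ t} = ENNReal.ofReal (1 - Real.exp (-(a k) * t)))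
    (δ : ℝ) (hδ0 : 0 < δ) (hδ1 : δ < 1) :
    P {ω | ∑ k ∈ range K, X k ω ≤ (1 - δ) * (∑ k ∈ range K, 1 / a k)}
      ≤ ENNReal.ofReal
          (Real.exp (-((range K).inf' (nonempty_range_iff.mpr hK.ne') a)
            * (∑ k ∈ range K, 1 / a k) * (-δ - Real.log (1 - δ)))) := by
  set m := ∑ k ∈ range K, 1 / a k
  set a₀ := (range K).inf' (nonempty_range_iff.mpr hK.ne') a
  have ha' : ∀ k ∈ range K, 0 < a k := fun k hk => ha k (mem_range.1 hk)
  have ha₀ : 0 < a₀ := (lt_inf'_iff _).2 ha'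
  have h1δ : 0 < 1 - δ := by linarith
  set s := a₀ * δ / (1 - δ)
  have hs : 0 ≤ s := by positivity
  have hlaw : ∀ k ∈ range K, P.map (X k) = expMeasure (a k) := fun k hk =>
    map_eq_expMeasure_of_cdf (hmeas k).aemeasurable (ha' k hk) (hexp k (mem_range.1 hk))
  have hnn : 0 ≤ᵐ[P] ∑ k ∈ range K, X k := by
    have hpos : ∀ᵐ ω ∂P, ∀ k ∈ range K, 0 < X k ω := (Filter.eventually_all_finset _).2
      fun k hk => ae_pos_of_map_eq_expMeasure (hmeas k).aemeasurable (ha' k hk) (hlaw k hk)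
    filter_upwards [hpos] with ω hω
    simpa only [Pi.zero_apply, Finset.sum_apply] using sum_nonneg fun k hk => (hω k hk).le
  have hmgf : mgf (∑ k ∈ range K, X k) P (-s) = ∏ k ∈ range K, a k / (a k + s) := by
    simp_rw [mgf_sum_of_map_eq_expMeasure hindep hmeas ha' hlaw
      (fun k hk => (neg_nonpos.2 hs).trans_lt (ha' k hk)), sub_neg_eq_add]
  have hprod : ∏ k ∈ range K, a k / (a k + s) ≤ (1 - δ) ^ (a₀ * m) := by
    rw [mul_sum, Real.rpow_sum_of_pos h1δ]
    refine prod_le_prod (fun k hk => have := ha' k hk; by positivity)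
      fun k hk => ?_
    rw [mul_one_div]
    exact div_add_mul_div_one_sub_le_rpow ha₀ (inf'_le a hk) hδ1
  have hchernoff := measureReal_le_le_exp_mul_mgf_neg (Y := ∑ k ∈ range K, X k) (by fun_prop)
    hnn hs ((1 - δ) * m)
  simp only [Finset.sum_apply] at hchernoff
  rw [← ofReal_measureReal]
  calc ENNReal.ofReal (P.real _)
      ≤ ENNReal.ofReal (Real.exp (s * ((1 - δ) * m)) * (1 - δ) ^ (a₀ * m)) := by
        gcongr
        exact hchernoff.trans (by rw [hmgf]; gcongr)
    _ = _ := by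
        rw [Real.rpow_def_of_pos h1δ, ← Real.exp_add]
        have hs_mul : s * (1 - δ) = a₀ * δ := div_mul_cancel₀ _ h1δ.ne'
        congr 2
        linear_combination m * hs_mul
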